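/- (QPM with the polynomial constraint converges to a DAG solution.) Let d ≥ 1, c > 0, and let f : ℝ^{d×d} → ℝ be continuously differentiable (where ℝ^{d×d} carries the Frobenius norm). Let (ρ_k) be a sequence of positive reals with ρ_k → ∞, let (τ_k) be a bounded sequence of nonnegative reals, and let (B_k) be a sequence of matrices satisfying ‖∇f(B_k) + ρ_k · (Tr((I + c·B_k∘B_k)^d) − d) · (((I + c·B_k∘B_k)^{d−1})ᵀ ∘ 2dc·B_k)‖_F ≤ τ_k for every k, where ∇f denotes the Frobenius gradient of f and ‖·‖_F the Frobenius norm. Then every limit point B* of the sequence (B_k) satisfies Tr((I + c·B*∘B*)^d) = d. -/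

import Mathlib

open Matrix Filter Topology

attribute [local instance] Matrix.frobeniusNormedAddCommGroup Matrix.frobeniusNormedSpace

/-! Along the subsequence, `ρ_k h(B_k) ∇h(B_k)` stays within `τ_k + ‖∇f(B_k)‖` of `0`, which is
bounded since `∇f` is continuous, while `ρ_k → ∞`; so `h(B*) ∇h(B*) = 0`. If `∇h(B*) = 0`, write
`I + c B*∘B* = I + W` with `W ≥ 0` entrywise. Then `Tr((I+W)^(k+1)) = Tr((I+W)^k) + Tr((I+W)^k W)`,
the increments `Tr((I+W)^k W)` are nonnegative and increase with `k`, and `∇h(B*) = 0` kills the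
last one, `Tr((I+W)^(d-1) W)`. Hence all increments vanish and `Tr((I+W)^d) = Tr I = d`. -/

@[fun_prop]
theorem Continuous.matrix_hadamard {X α m n : Type*} [TopologicalSpace X] [TopologicalSpace α]
    [Mul α] [ContinuousMul α] {A B : X → Matrix m n α} (hA : Continuous A) (hB : Continuous B) :
    Continuous fun x => A x ⊙ B x :=
  continuous_matrix fun i j => (hA.matrix_elem i j).mul (hB.matrix_elem i j)

section NonnegEntries

variable {n : Type*} [DecidableEq n]

theorem one_add_apply_nonneg {W : Matrix n n ℝ} (hW : ∀ i j, 0 ≤ W i j) (i j : n) :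
    0 ≤ (1 + W) i j :=
  add_nonneg (by rw [one_apply]; split_ifs <;> norm_num) (hW i j)

variable [Fintype n]

theorem trace_pow_one_add {R : Type*} [Semiring R] (W : Matrix n n R) (k : ℕ) :
    trace ((1 + W) ^ k) =
      (Fintype.card n : R) + ∑ j ∈ Finset.range k, trace ((1 + W) ^ j * W) := by
  induction k with
  | zero => simp
  | succ k ih => rw [pow_succ, mul_add, mul_one, trace_add, ih, Finset.sum_range_succ, add_assoc]

variable {W : Matrix n n ℝ}

theorem monotone_pow_one_add_apply (hW : ∀ i j, 0 ≤ W i j) (i j : n) :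
    Monotone fun k : ℕ => ((1 + W) ^ k) i j :=
  monotone_nat_of_le_succ fun k => by
    rw [pow_succ, mul_add, mul_one, Matrix.add_apply]
    exact le_add_of_nonneg_right <| Finset.sum_nonneg fun l _ =>
      mul_nonneg (pow_apply_nonneg (one_add_apply_nonneg hW) k i l) (hW l j)

theorem trace_pow_one_add_mul_nonneg (hW : ∀ i j, 0 ≤ W i j) (k : ℕ) :
    0 ≤ trace ((1 + W) ^ k * W) :=
  Finset.sum_nonneg fun i _ => Finset.sum_nonneg fun j _ =>
    mul_nonneg (pow_apply_nonneg (one_add_apply_nonneg hW) k i j) (hW j i)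

theorem monotone_trace_pow_one_add_mul (hW : ∀ i j, 0 ≤ W i j) :
    Monotone fun k : ℕ => trace ((1 + W) ^ k * W) :=
  fun _ _ hkl => Finset.sum_le_sum fun i _ => Finset.sum_le_sum fun j _ =>
    mul_le_mul_of_nonneg_right (monotone_pow_one_add_apply hW i j hkl) (hW j i)

theorem trace_pow_succ_one_add_eq_card (hW : ∀ i j, 0 ≤ W i j) {k : ℕ}
    (h : trace ((1 + W) ^ k * W) = 0) : trace ((1 + W) ^ (k + 1)) = (Fintype.card n : ℝ) := by
  rw [trace_pow_one_add, add_eq_left]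
  exact Finset.sum_eq_zero fun j hj =>
    le_antisymm (h ▸ monotone_trace_pow_one_add_mul hW (Finset.mem_range_succ_iff.mp hj))
      (trace_pow_one_add_mul_nonneg hW j)

end NonnegEntries

theorem trace_mul_smul_hadamard_self_eq_zero {n : Type*} [Fintype n] {P A : Matrix n n ℝ}
    {a : ℝ} (ha : a ≠ 0) (c : ℝ) (h : Pᵀ ⊙ (a • A) = 0) : trace (P * (c • (A ⊙ A))) = 0 := by
  have hPA : ∀ i j, P i j * A j i = 0 := fun i j => by
    have := congrFun₂ h j i
    simp only [hadamard_apply, transpose_apply, Matrix.smul_apply, smul_eq_mul,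
      Matrix.zero_apply] at this
    have : a * (P i j * A j i) = 0 := by linear_combination this
    exact (mul_eq_zero.mp this).resolve_left ha
  refine Finset.sum_eq_zero fun i _ => Finset.sum_eq_zero fun j _ => ?_
  simp only [Matrix.smul_apply, hadamard_apply, smul_eq_mul]
  linear_combination (c * A j i) * hPA i j

section PolynomialAcyclicity

variable {d : ℕ}

def hBin (c : ℝ) (A : Matrix (Fin d) (Fin d) ℝ) : ℝ :=
  trace ((1 + c • (A ⊙ A)) ^ d) - d

def hBinGrad (c : ℝ) (A : Matrix (Fin d) (Fin d) ℝ) : Matrix (Fin d) (Fin d) ℝ :=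
  ((1 + c • (A ⊙ A)) ^ (d - 1))ᵀ ⊙ ((2 * d * c : ℝ) • A)

theorem continuous_hBin (c : ℝ) : Continuous (hBin (d := d) c) := by
  unfold hBin; fun_prop

theorem continuous_hBinGrad (c : ℝ) : Continuous (hBinGrad (d := d) c) := by
  unfold hBinGrad; fun_prop

theorem hBin_eq_zero_of_hBinGrad_eq_zero (hd : 1 ≤ d) {c : ℝ} (hc : 0 < c)
    {A : Matrix (Fin d) (Fin d) ℝ} (h : hBinGrad c A = 0) : hBin c A = 0 := by
  have hW : ∀ i j, 0 ≤ (c • (A ⊙ A)) i j := fun i j => mul_nonneg hc.le (mul_self_nonneg _)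
  have h2dc : (2 * d * c : ℝ) ≠ 0 := by positivity
  have := trace_pow_succ_one_add_eq_card hW (trace_mul_smul_hadamard_self_eq_zero h2dc c h)
  rw [Nat.sub_add_cancel hd, Fintype.card_fin] at this
  exact sub_eq_zero.mpr this

end PolynomialAcyclicity

theorem continuous_of_fderiv_apply_eq_sum_mul {m n : Type*} [Fintype m] [Fintype n]
    {f : Matrix m n ℝ → ℝ} {g : Matrix m n ℝ → Matrix m n ℝ} (hf : ContDiff ℝ 1 f)
    (hg : ∀ B H, fderiv ℝ f B H = ∑ i, ∑ j, g B i j * H i j) : Continuous g := by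
  classical
  have hg_single : g = fun B => of fun i j => fderiv ℝ f B (single i j 1) := by
    ext B i j
    simp [hg, single_apply, ite_and]
  rw [hg_single]
  exact continuous_matrix fun i j => (hf.continuous_fderiv one_ne_zero).clm_apply continuous_const

theorem eq_zero_of_norm_add_smul_le {ι X E : Type*} [TopologicalSpace X] [NormedAddCommGroup E]
    [NormedSpace ℝ E] {l : Filter ι} [l.NeBot] {x : ι → X} {x₀ : X} {g G : X → E} {ρ : ι → ℝ}
    {C : ℝ} (hg : ContinuousAt g x₀) (hG : ContinuousAt G x₀) (hx : Tendsto x l (𝓝 x₀))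
    (hρ : Tendsto ρ l atTop) (hbound : ∀ᶠ i in l, ‖g (x i) + ρ i • G (x i)‖ ≤ C) :
    G x₀ = 0 := by
  have hsmall : Tendsto (fun i => (C + ‖g (x i)‖) * (ρ i)⁻¹) l (𝓝 0) := by
    simpa using (tendsto_const_nhds.add (hg.tendsto.comp hx).norm).mul hρ.inv_tendsto_atTop
  have hle : ∀ᶠ i in l, ‖G (x i)‖ ≤ (C + ‖g (x i)‖) * (ρ i)⁻¹ := by
    filter_upwards [hbound, hρ.eventually_gt_atTop 0] with i hi hρi
    rw [← div_eq_mul_inv, le_div_iff₀ hρi]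
    calc ‖G (x i)‖ * ρ i = ‖(g (x i) + ρ i • G (x i)) - g (x i)‖ := by
          rw [add_sub_cancel_left, norm_smul, Real.norm_of_nonneg hρi.le, mul_comm]
      _ ≤ ‖g (x i) + ρ i • G (x i)‖ + ‖g (x i)‖ := norm_sub_le _ _
      _ ≤ C + ‖g (x i)‖ := by gcongr
  exact tendsto_nhds_unique (hG.tendsto.comp hx) (squeeze_zero_norm' hle hsmall)

theorem qpm_poly_limit_point_is_dag_general
    (d : ℕ) (hd : 1 ≤ d) (c : ℝ) (hc : 0 < c)
    (f : Matrix (Fin d) (Fin d) ℝ → ℝ)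
    (g : Matrix (Fin d) (Fin d) ℝ → Matrix (Fin d) (Fin d) ℝ)
    (hf : ContDiff ℝ 1 f)
    (hg : ∀ (B : Matrix (Fin d) (Fin d) ℝ) (H : Matrix (Fin d) (Fin d) ℝ),
      fderiv ℝ f B H = ∑ i : Fin d, ∑ j : Fin d, g B i j * H i j)
    (ρ : ℕ → ℝ) (hρ : Tendsto ρ atTop atTop)
    (τ : ℕ → ℝ) (hτbdd : ∃ C : ℝ, ∀ k, τ k ≤ C)
    (B : ℕ → Matrix (Fin d) (Fin d) ℝ)
    (hstat : ∀ k, ‖g (B k) +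
        (ρ k * (Matrix.trace ((1 + c • (B k ⊙ B k)) ^ d) - (d : ℝ))) •
          (((1 + c • (B k ⊙ B k)) ^ (d - 1))ᵀ ⊙ ((2 * d * c : ℝ) • B k))‖ ≤ τ k)
    (Bstar : Matrix (Fin d) (Fin d) ℝ)
    (φ : ℕ → ℕ) (hφ : StrictMono φ)
    (hlim : Tendsto (fun n => B (φ n)) atTop (nhds Bstar)) :
    Matrix.trace ((1 + c • (Bstar ⊙ Bstar)) ^ d) = (d : ℝ) := by
  obtain ⟨C, hC⟩ := hτbdd
  have hbound : ∀ k, ‖g (B k) + ρ k • (hBin c (B k) • hBinGrad c (B k))‖ ≤ C := fun k => by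
    rw [← mul_smul]
    exact (hstat k).trans (hC k)
  have hpenalty : hBin c Bstar • hBinGrad c Bstar = 0 :=
    eq_zero_of_norm_add_smul_le (G := fun A => hBin c A • hBinGrad c A)
      (continuous_of_fderiv_apply_eq_sum_mul hf hg).continuousAt
      ((continuous_hBin c).smul (continuous_hBinGrad c)).continuousAt hlim
      (hρ.comp hφ.tendsto_atTop) (Eventually.of_forall fun n => hbound (φ n))
  rcases smul_eq_zero.mp hpenalty with h | h
  · exact sub_eq_zero.mp h
  · exact sub_eq_zero.mp (hBin_eq_zero_of_hBinGrad_eq_zero hd hc h)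

/-- QPM with the polynomial constraint `h_bin(B) = Tr((I + c·B∘B)^d) − d` converges to a DAG
solution: here `g` is the Frobenius gradient of the continuously differentiable objective `f`
(i.e. `Df(B) H = ⟨g B, H⟩_F` for all `H`), `ρ k → ∞`, the tolerances `τ k` are nonnegative and
bounded, and each iterate satisfies the inexact stationarity condition
`‖∇f(B_k) + ρ_k (Tr((I + c·B_k∘B_k)^d) − d) • ((I + c·B_k∘B_k)^{d−1})ᵀ ∘ 2dc·B_k‖_F ≤ τ_k`.
Then every limit point `B*` satisfies `Tr((I + c·B*∘B*)^d) = d`. -/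
theorem qpm_poly_limit_point_is_dag
    (d : ℕ) (hd : 1 ≤ d) (c : ℝ) (hc : 0 < c)
    (f : Matrix (Fin d) (Fin d) ℝ → ℝ)
    (g : Matrix (Fin d) (Fin d) ℝ → Matrix (Fin d) (Fin d) ℝ)
    (hf : ContDiff ℝ 1 f)
    (hg : ∀ (B : Matrix (Fin d) (Fin d) ℝ) (H : Matrix (Fin d) (Fin d) ℝ),
      fderiv ℝ f B H = ∑ i : Fin d, ∑ j : Fin d, g B i j * H i j)
    (ρ : ℕ → ℝ) (hρpos : ∀ k, 0 < ρ k) (hρ : Tendsto ρ atTop atTop)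
    (τ : ℕ → ℝ) (hτnonneg : ∀ k, 0 ≤ τ k) (hτbdd : ∃ C : ℝ, ∀ k, τ k ≤ C)
    (B : ℕ → Matrix (Fin d) (Fin d) ℝ)
    (hstat : ∀ k, ‖g (B k) +
        (ρ k * (Matrix.trace ((1 + c • (B k ⊙ B k)) ^ d) - (d : ℝ))) •
          (((1 + c • (B k ⊙ B k)) ^ (d - 1))ᵀ ⊙ ((2 * d * c : ℝ) • B k))‖ ≤ τ k)
    (Bstar : Matrix (Fin d) (Fin d) ℝ)
    (φ : ℕ → ℕ) (hφ : StrictMono φ)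
    (hlim : Tendsto (fun n => B (φ n)) atTop (nhds Bstar)) :
    Matrix.trace ((1 + c • (Bstar ⊙ Bstar)) ^ d) = (d : ℝ) :=
  qpm_poly_limit_point_is_dag_general d hd c hc f g hf hg ρ hρ τ hτbdd B hstat Bstar φ hφ hlim
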